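/- Let n, k, b be integers with 1 ≤ k-1 ≤ b ≤ n and b ≥ k. Let X, Y ∈ V_{n,k,b} be such that min(X) < min(Y), or min(X) = min(Y) and max(X) < max(Y). Then the graph distance between X and Y in G_{n,k,b} is at most ⌈(max(Y) - min(X) - b)/(b-k+1)⌉ + 1, where the ceiling is taken over the rationals (the numerator may be negative). -/

import Mathlib

/-- The maximum element of a finite set of naturals (`0` for the empty set). -/
def fmax (X : Finset ℕ) : ℕ := X.max.unbotD 0

/-- The minimum element of a finite set of naturals (`0` for the empty set). -/
def fmin (X : Finset ℕ) : ℕ := X.min.untopD 0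

/-- The vertex set `V_{n,k,b}`: all `k`-element subsets `X` of `{0,…,n}`
with `max X - min X ≤ b`. -/
def Vnkb (n k b : ℕ) : Finset (Finset ℕ) :=
  ((Finset.range (n + 1)).powersetCard k).filter (fun X => fmax X - fmin X ≤ b)

/-- The graph `G_{n,k,b}`: two distinct vertices `X, Y` are adjacent iff
`max (X ∪ Y) - min (X ∪ Y) ≤ b`. -/
def Gnkb (n k b : ℕ) : SimpleGraph (Vnkb n k b) where
  Adj X Y := X ≠ Y ∧ fmax (X.1 ∪ Y.1) - fmin (X.1 ∪ Y.1) ≤ b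
  symm := ⟨by
    rintro X Y ⟨h1, h2⟩
    exact ⟨h1.symm, by rwa [Finset.union_comm]⟩⟩
  loopless := ⟨by rintro X ⟨h1, -⟩; exact h1 rfl⟩

/-- The bandwidth of a finite graph: the minimum over all bijective labellings of the
vertices by `{0, …, |V|-1}` (equivalently `{1, …, |V|}`) of the maximal absolute
label difference along an edge. -/
noncomputable def bandwidth {V : Type*} [Fintype V] (G : SimpleGraph V) : ℕ :=
  sInf {m : ℕ | ∃ f : V ≃ Fin (Fintype.card V),
    ∀ u v : V, G.Adj u v → (((f u : ℕ) : ℤ) - ((f v : ℕ) : ℤ)).natAbs ≤ m}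

/-!
Write `d = b - k + 1` and `p = min X`. The block `Z = {p + d, …, p + b}` is a vertex sharing the
window `[p, p + b]` with `X`, so it is equal or adjacent to `X`, and its minimum exceeds `p` by `d`.
Replacing `X` by `Z` thus lowers `⌈(max Y - min X - b) / d⌉` by one; once this is `≤ 0`, the sets
`X` and `Y` fit in a common window of length `b` and are equal or adjacent. The ordering of `X`
and `Y` gives `max Y ≥ min X + k`, which keeps the ceiling nonnegative.
-/

lemma fmin_le {X : Finset ℕ} {x : ℕ} (hx : x ∈ X) : fmin X ≤ x := by
  rw [fmin, ← Finset.coe_min' ⟨x, hx⟩, WithTop.untopD_coe]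
  exact X.min'_le x hx

lemma le_fmax {X : Finset ℕ} {x : ℕ} (hx : x ∈ X) : x ≤ fmax X := by
  rw [fmax, ← Finset.coe_max' ⟨x, hx⟩, WithBot.unbotD_coe]
  exact X.le_max' x hx

lemma fmin_mem {X : Finset ℕ} (h : X.Nonempty) : fmin X ∈ X := by
  rw [fmin, ← Finset.coe_min' h, WithTop.untopD_coe]
  exact X.min'_mem h

lemma fmax_mem {X : Finset ℕ} (h : X.Nonempty) : fmax X ∈ X := by
  rw [fmax, ← Finset.coe_max' h, WithBot.unbotD_coe]
  exact X.max'_mem h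

lemma fmax_sub_fmin_le {A : Finset ℕ} {b : ℕ} (h : ∀ x ∈ A, ∀ y ∈ A, x ≤ y + b) :
    fmax A - fmin A ≤ b := by
  rcases A.eq_empty_or_nonempty with rfl | hA
  · simp [fmax, fmin]
  · have := h _ (fmax_mem hA) _ (fmin_mem hA)
    omega

lemma card_add_fmin_le_fmax (X : Finset ℕ) : X.card + fmin X ≤ fmax X + 1 := by
  rcases X.eq_empty_or_nonempty with rfl | hX
  · simp [fmin, fmax]
  · have hcard : X.card ≤ (Finset.Icc (fmin X) (fmax X)).card :=
      Finset.card_le_card fun x hx => Finset.mem_Icc.mpr ⟨fmin_le hx, le_fmax hx⟩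
    have := fmin_le (fmax_mem hX)
    rw [Nat.card_Icc] at hcard
    omega

section Vnkb

variable {n k b : ℕ}

lemma mem_Vnkb {X : Finset ℕ} :
    X ∈ Vnkb n k b ↔ X ⊆ Finset.range (n + 1) ∧ X.card = k ∧ fmax X - fmin X ≤ b := by
  rw [Vnkb, Finset.mem_filter, Finset.mem_powersetCard, and_assoc]

lemma le_add_of_mem_Vnkb {X : Finset ℕ} (hX : X ∈ Vnkb n k b) {x y : ℕ} (hx : x ∈ X)
    (hy : y ∈ X) : x ≤ y + b := by
  have := (mem_Vnkb.mp hX).2.2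
  have := le_fmax hx
  have := fmin_le hy
  omega

lemma Ico_mem_Vnkb {c : ℕ} (hn : c + k ≤ n + 1) (hkb : k ≤ b + 1) :
    Finset.Ico c (c + k) ∈ Vnkb n k b := by
  refine mem_Vnkb.mpr ⟨fun x hx => ?_, by simp, fmax_sub_fmin_le fun x hx y hy => ?_⟩ <;>
    simp only [Finset.mem_Ico, Finset.mem_range] at * <;> omega

lemma fmin_add_card_le_fmax {X Y : Vnkb n k b}
    (hXY : fmin X.1 < fmin Y.1 ∨ (fmin X.1 = fmin Y.1 ∧ fmax X.1 < fmax Y.1)) :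
    fmin X.1 + k ≤ fmax Y.1 := by
  have hX := card_add_fmin_le_fmax X.1
  have hY := card_add_fmin_le_fmax Y.1
  rw [(mem_Vnkb.mp X.2).2.1] at hX
  rw [(mem_Vnkb.mp Y.2).2.1] at hY
  omega

lemma edist_le_one_of_forall_le {X Y : Vnkb n k b}
    (hXY : ∀ x ∈ X.1, ∀ y ∈ Y.1, x ≤ y + b) (hYX : ∀ y ∈ Y.1, ∀ x ∈ X.1, y ≤ x + b) :
    (Gnkb n k b).edist X Y ≤ 1 := by
  rw [SimpleGraph.edist_le_one_iff_adj_or_eq, or_iff_not_imp_right]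
  refine fun hne => ⟨hne, fmax_sub_fmin_le fun x hx y hy => ?_⟩
  rcases Finset.mem_union.mp hx with hx | hx <;> rcases Finset.mem_union.mp hy with hy | hy
  exacts [le_add_of_mem_Vnkb X.2 hx hy, hXY x hx y hy, hYX x hx y hy,
    le_add_of_mem_Vnkb Y.2 hx hy]

theorem edist_le_succ_of_forall_le (hkb : k ≤ b + 1) (T : ℕ) (X Y : Vnkb n k b)
    (hXY : ∀ x ∈ X.1, ∀ y ∈ Y.1, x ≤ y + b)
    (hYX : ∀ y ∈ Y.1, ∀ x ∈ X.1, y ≤ x + b + T * (b + 1 - k)) :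
    (Gnkb n k b).edist X Y ≤ T + 1 := by
  induction T generalizing X with
  | zero => simpa using edist_le_one_of_forall_le hXY (by simpa using hYX)
  | succ T ih =>
    by_cases hnear : ∀ y ∈ Y.1, ∀ x ∈ X.1, y ≤ x + b + T * (b + 1 - k)
    · exact (ih X hXY hnear).trans (by gcongr; simp)
    push Not at hnear
    obtain ⟨y₀, hy₀, x₀, hx₀, hfar⟩ := hnear
    set p := fmin X.1
    have hp : p ≤ x₀ := fmin_le hx₀
    have hpX : p ∈ X.1 := fmin_mem ⟨x₀, hx₀⟩
    have hy₀n : y₀ < n + 1 := Finset.mem_range.mp ((mem_Vnkb.mp Y.2).1 hy₀)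
    have hT : T * (b + 1 - k) + (b + 1 - k) = (T + 1) * (b + 1 - k) := by ring
    let Z : Vnkb n k b := ⟨_, Ico_mem_Vnkb (c := p + (b + 1 - k)) (by omega) hkb⟩
    have hZ : ∀ z ∈ Z.1, p + (b + 1 - k) ≤ z ∧ z ≤ p + b := fun z hz => by
      simp only [Z, Finset.mem_Ico] at hz; omega
    have hXZ : (Gnkb n k b).edist X Z ≤ 1 := by
      refine edist_le_one_of_forall_le (fun x hx z hz => ?_) (fun z hz x hx => ?_)
      · have := le_add_of_mem_Vnkb X.2 hx hpX; have := hZ z hz; omega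
      · have := fmin_le hx; have := hZ z hz; omega
    have hZY : (Gnkb n k b).edist Z Y ≤ T + 1 := by
      refine ih Z (fun z hz y hy => ?_) (fun y hy z hz => ?_)
      · have := le_add_of_mem_Vnkb Y.2 hy₀ hy; have := hZ z hz; omega
      · have := hYX y hy p hpX; have := hZ z hz; omega
    calc (Gnkb n k b).edist X Y ≤ (Gnkb n k b).edist X Z + (Gnkb n k b).edist Z Y :=
          SimpleGraph.edist_triangle
      _ ≤ 1 + (T + 1) := add_le_add hXZ hZY
      _ = ↑(T + 1) + 1 := by push_cast; ring

end Vnkb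

lemma ceil_div_nonneg_and_le {x d : ℚ} (hd : 0 < d) (hx : -d < x) :
    0 ≤ ⌈x / d⌉ ∧ x ≤ ⌈x / d⌉ * d := by
  refine ⟨Int.ceil_nonneg_of_neg_one_lt ?_, (div_le_iff₀ hd).mp (Int.le_ceil _)⟩
  rwa [lt_div_iff₀ hd, neg_one_mul]

theorem dist_le_ceil_general (n k b : ℕ)
    (hbk : k ≤ b)
    (X Y : Vnkb n k b)
    (hXY : fmin X.1 < fmin Y.1 ∨ (fmin X.1 = fmin Y.1 ∧ fmax X.1 < fmax Y.1)) :
    ((Gnkb n k b).dist X Y : ℤ) ≤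
      ⌈((fmax Y.1 : ℚ) - (fmin X.1 : ℚ) - (b : ℚ)) / ((b : ℚ) - (k : ℚ) + 1)⌉ + 1 := by
  set p := fmin X.1
  set q := fmax Y.1
  have hkb : k ≤ b + 1 := hbk.trans b.le_succ
  have hpq : p + k ≤ q := fmin_add_card_le_fmax hXY
  have hd : (b : ℚ) - k + 1 = ((b + 1 - k : ℕ) : ℚ) := by push_cast [hkb]; ring
  rw [hd]
  obtain ⟨ht, hqt⟩ := ceil_div_nonneg_and_le (x := (q : ℚ) - p - b) (d := ((b + 1 - k : ℕ) : ℚ))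
    (by exact_mod_cast Nat.sub_pos_of_lt (Nat.lt_succ_of_le hbk))
    (by push_cast [hkb]; linarith [(by exact_mod_cast hpq : (p : ℚ) + k ≤ q)])
  lift ⌈((q : ℚ) - p - b) / ((b + 1 - k : ℕ) : ℚ)⌉ to ℕ using ht with T
  have hqT : q ≤ p + b + T * (b + 1 - k) := by
    have : (q : ℚ) ≤ p + b + T * (b + 1 - k : ℕ) := by push_cast at hqt ⊢; linarith
    exact_mod_cast this
  have hXY' : ∀ x ∈ X.1, ∀ y ∈ Y.1, x ≤ y + b := fun x hx y hy => by
    have := (mem_Vnkb.mp X.2).2.2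
    have := le_fmax hx
    have := fmin_le hy
    omega
  have hYX : ∀ y ∈ Y.1, ∀ x ∈ X.1, y ≤ x + b + T * (b + 1 - k) := fun y hy x hx => by
    have := le_fmax hy
    have := fmin_le hx
    omega
  exact_mod_cast ENat.toNat_le_of_le_natCast (edist_le_succ_of_forall_le hkb T X Y hXY' hYX)

/-- If `X, Y ∈ V_{n,k,b}` with `min X < min Y`, or `min X = min Y` and `max X < max Y`,
then the graph distance between `X` and `Y` in `G_{n,k,b}` is at most
`⌈(max Y - min X - b)/(b-k+1)⌉ + 1` (ceiling over the rationals). -/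
theorem dist_le_ceil (n k b : ℕ)
    (h1 : 1 ≤ k - 1) (h2 : k - 1 ≤ b) (h3 : b ≤ n) (hbk : k ≤ b)
    (X Y : Vnkb n k b)
    (hXY : fmin X.1 < fmin Y.1 ∨ (fmin X.1 = fmin Y.1 ∧ fmax X.1 < fmax Y.1)) :
    ((Gnkb n k b).dist X Y : ℤ) ≤
      ⌈((fmax Y.1 : ℚ) - (fmin X.1 : ℚ) - (b : ℚ)) / ((b : ℚ) - (k : ℚ) + 1)⌉ + 1 :=
  dist_le_ceil_general n k b hbk X Y hXY
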